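/- arXiv:2212.02388 — 5 statements merged into one kernel-verified Lean document; each statement's English description precedes it below -/
import Mathlib

section
/- Let G be a graph, let {B_x : x ∈ V(T)} be a tree-partition of G, let x ∈ V(T), and let v, w ∈ N_G(B_x) be vertices lying in the same connected component of G − B_x. Then T contains an edge xy such that both v and w belong to B_y. -/
/-- An `H`-partition of `G`: a partition of the vertices of `G` into parts indexed by
the vertices of `H` such that the two ends of every edge of `G` lie in the same part
or in parts indexed by adjacent vertices of `H`.  A tree-partition (path-partition,
i.e. layering) is an `H`-partition where `H` is a tree (respectively, a path). -/
def IsHPartition {α β : Type*} (G : SimpleGraph α) (H : SimpleGraph β)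
    (B : β → Set α) : Prop :=
  (∀ v : α, ∃! x : β, v ∈ B x) ∧
  (∀ ⦃v w : α⦄, G.Adj v w → ∀ ⦃x y : β⦄, v ∈ B x → w ∈ B y → x = y ∨ H.Adj x y)

/-!
A walk of `G − B_x` projects, part by part, to a walk of `T − x`, so the parts `B_y ∋ v` and
`B_z ∋ w` are joined in `T − x`. Both `y` and `z` are neighbours of `x` because `v` and `w` have
neighbours in `B_x`; in a tree two neighbours of `x` joined avoiding `x` coincide.
-/

namespace SimpleGraph

lemma IsAcyclic.eq_of_adj_of_reachable_induce_ne {V : Type*} {T : SimpleGraph V}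
    (hT : T.IsAcyclic) {x : V} {a b : {y | y ≠ x}}
    (hab : (T.induce {y | y ≠ x}).Reachable a b) (ha : T.Adj x a) (hb : T.Adj x b) :
    a = b := by
  classical
  obtain ⟨q⟩ := hab
  let q' : T.Walk a b := q.map (Embedding.induce _).toHom
  have hx : x ∉ q'.bypass.support := fun hx => by
    obtain ⟨y, -, hy⟩ := List.mem_map.mp (q.support_map _ ▸ q'.support_bypass_subset_support hx)
    exact y.2 hy
  have hp : (Walk.cons ha q'.bypass).IsPath :=
    (Walk.cons_isPath_iff ha _).mpr ⟨q'.bypass_isPath, hx⟩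
  have hb_snd := hT.eq_snd_of_adj_start hp hb (Walk.end_mem_support _)
  rw [Walk.snd_cons] at hb_snd
  exact Subtype.ext hb_snd.symm

end SimpleGraph

namespace IsHPartition

variable {α β : Type*} {G : SimpleGraph α} {H : SimpleGraph β} {B : β → Set α}

noncomputable def index (hB : IsHPartition G H B) (v : α) : β := (hB.1 v).choose

lemma mem_index (hB : IsHPartition G H B) (v : α) : v ∈ B (hB.index v) :=
  (hB.1 v).choose_spec.1

lemma index_ne_of_notMem (hB : IsHPartition G H B) {v : α} {x : β} (hv : v ∉ B x) :
    hB.index v ≠ x :=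
  fun h => hv (h ▸ hB.mem_index v)

lemma index_eq_or_adj (hB : IsHPartition G H B) {v w : α} (hvw : G.Adj v w) :
    hB.index v = hB.index w ∨ H.Adj (hB.index v) (hB.index w) :=
  hB.2 hvw (hB.mem_index v) (hB.mem_index w)

lemma adj_index_of_adj_of_mem (hB : IsHPartition G H B) {s v : α} {x : β} (hs : s ∈ B x)
    (hv : v ∉ B x) (hsv : G.Adj s v) : H.Adj x (hB.index v) :=
  (hB.2 hsv hs (hB.mem_index v)).resolve_left (hB.index_ne_of_notMem hv).symm

lemma reachable_induce_index (hB : IsHPartition G H B) {t : Set α} {s : Set β}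
    (hts : ∀ v ∈ t, hB.index v ∈ s) {a b : t} (hab : (G.induce t).Reachable a b) :
    (H.induce s).Reachable ⟨hB.index a, hts a a.2⟩ ⟨hB.index b, hts b b.2⟩ := by
  let f : t → s := fun v => ⟨hB.index v, hts v v.2⟩
  rw [SimpleGraph.reachable_iff_reflTransGen] at hab ⊢
  refine Relation.ReflTransGen.lift' f (fun v w hvw => ?_) a b hab
  rcases hB.index_eq_or_adj hvw with h | h
  · show Relation.ReflTransGen _ (f v) (f w)
    rw [show f v = f w from Subtype.ext h]
  · exact Relation.ReflTransGen.single h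

end IsHPartition

/-- If `{B x : x ∈ V(T)}` is a tree-partition of `G` and `v, w ∈ N_G(B x)` lie in the
same component of `G − B x`, then `T` has an edge `x y` with `v, w ∈ B y`. -/
theorem stmt5 {α ι : Type} (G : SimpleGraph α) (T : SimpleGraph ι)
    (hT : T.IsTree) (B : ι → Set α) (hB : IsHPartition G T B)
    (x : ι) (v w : α)
    (hv : v ∉ B x) (hvN : ∃ s ∈ B x, G.Adj s v)
    (hw : w ∉ B x) (hwN : ∃ s ∈ B x, G.Adj s w)
    (hcomp : (G.induce {u : α | u ∉ B x}).Reachable ⟨v, hv⟩ ⟨w, hw⟩) :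
    ∃ y : ι, T.Adj x y ∧ v ∈ B y ∧ w ∈ B y := by
  obtain ⟨s, hs, hsv⟩ := hvN
  obtain ⟨s', hs', hsw⟩ := hwN
  have hxv : T.Adj x (hB.index v) := hB.adj_index_of_adj_of_mem hs hv hsv
  have hxw : T.Adj x (hB.index w) := hB.adj_index_of_adj_of_mem hs' hw hsw
  have hreach := hB.reachable_induce_index (s := {y | y ≠ x})
    (fun _ hu => hB.index_ne_of_notMem hu) hcomp
  have hvw : hB.index v = hB.index w :=
    congrArg Subtype.val (hT.isAcyclic.eq_of_adj_of_reachable_induce_ne hreach hxv hxw)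
  exact ⟨hB.index v, hxv, hB.mem_index v, hvw ▸ hB.mem_index w⟩
end

section
/- Let h ≥ 1, let r be the root of the complete binary tree T_h of height h, and let S ⊆ V(T_h) with 1 ≤ |S| < 2^h. Then there exists a vertex v of T_h such that (i) the depth of v is at most log₂|S| + 1; (ii) v ≠ r and the parent of v belongs to S ∪ {r}; and (iii) T_h − S contains a path from v to a leaf of T_h. -/
/-- Vertices of the complete binary tree of height `h`: a vertex of depth `i`
is a pair `⟨i, j⟩` where `j < 2 ^ i` is its left-to-right index at depth `i`. -/
abbrev BT (h : ℕ) := Σ i : Fin (h + 1), Fin (2 ^ (i : ℕ))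

/-- The root of the complete binary tree. -/
def btRoot (h : ℕ) : BT h := ⟨0, ⟨0, by positivity⟩⟩

/-- `p` is the parent of `v` in the complete binary tree: the children of
`⟨i, j⟩` are `⟨i + 1, 2 * j⟩` (left) and `⟨i + 1, 2 * j + 1⟩` (right). -/
def IsParent {h : ℕ} (p v : BT h) : Prop :=
  (v.1 : ℕ) = (p.1 : ℕ) + 1 ∧ (v.2 : ℕ) / 2 = (p.2 : ℕ)

/-- The complete binary tree `T_h` of height `h` as a simple graph. -/
def btTree (h : ℕ) : SimpleGraph (BT h) :=
  SimpleGraph.fromRel (fun p v => IsParent p v)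

/-- `a` is an ancestor of `v` (this includes `a = v`). -/
def IsAncestor {h : ℕ} (a v : BT h) : Prop :=
  (a.1 : ℕ) ≤ (v.1 : ℕ) ∧ (a.2 : ℕ) = (v.2 : ℕ) / 2 ^ ((v.1 : ℕ) - (a.1 : ℕ))

/-- A set of vertices of `T_h` is unrelated if no element of it is an ancestor of
another element of it. -/
def Unrelated {h : ℕ} (B : Set (BT h)) : Prop :=
  ∀ a ∈ B, ∀ v ∈ B, a ≠ v → ¬IsAncestor a v

/-- `v` is a leaf of `T_h`, i.e. has depth `h`. -/
def IsLeaf {h : ℕ} (v : BT h) : Prop := (v.1 : ℕ) = h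

/-- The graph `G_h`: the complete binary tree `T_h` together with, for each depth
`i ∈ {1, …, h}`, the edges of a path `D_i` through all the vertices of depth `i`
in left-to-right order. -/
def gGraph (h : ℕ) : SimpleGraph (BT h) :=
  SimpleGraph.fromRel (fun a b =>
    IsParent a b ∨ ((a.1 : ℕ) = (b.1 : ℕ) ∧ (a.2 : ℕ) + 1 = (b.2 : ℕ)))

/-- `T_h − S` contains a path from `v` to a leaf of `T_h`. -/
def ReachesLeafAvoiding {h : ℕ} (S : Set (BT h)) (v : BT h) : Prop :=
  ∃ (hv : v ∈ {u : BT h | u ∉ S}) (l : BT h) (hl : l ∈ {u : BT h | u ∉ S}),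
    IsLeaf l ∧ ((btTree h).induce {u : BT h | u ∉ S}).Reachable ⟨v, hv⟩ ⟨l, hl⟩

/-!
Let `k = ⌊log₂ |S|⌋ + 1`, so `|S| < 2 ^ k`. Every vertex of depth at least `k` lies below exactly
one vertex of depth `k`, so fewer than `2 ^ k` vertices of depth `k` have an element of `S` in
their subtree; below one of the others pick a leaf `ℓ`. On the root-to-`ℓ` path let `p` be the
deepest vertex lying in `S ∪ {r}`; its depth is less than `k`, and its child `v` on the path
works, the rest of the path down to `ℓ` avoiding `S`.
-/

variable {h : ℕ}

lemma BT.ext {a b : BT h} (h₁ : (a.1 : ℕ) = b.1) (h₂ : (a.2 : ℕ) = b.2) : a = b := by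
  obtain ⟨⟨i, hi⟩, ⟨x, hx⟩⟩ := a
  obtain ⟨⟨i', hi'⟩, ⟨x', hx'⟩⟩ := b
  simp only at h₁ h₂
  subst h₁ h₂
  rfl

lemma btTree_adj_of_isParent {p v : BT h} (hpv : IsParent p v) : (btTree h).Adj p v := by
  refine SimpleGraph.fromRel_adj _ _ _ |>.2 ⟨fun hpv' => ?_, .inl hpv⟩
  have := hpv.1
  rw [hpv'] at this
  omega

lemma ReachesLeafAvoiding.of_adj {S : Set (BT h)} {u v : BT h} (hu : u ∉ S)
    (huv : (btTree h).Adj u v) (hv : ReachesLeafAvoiding S v) : ReachesLeafAvoiding S u := by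
  obtain ⟨hv, l, hl, hleaf, hreach⟩ := hv
  exact ⟨hu, l, hl, hleaf,
    (show ((btTree h).induce {u | u ∉ S}).Adj ⟨u, hu⟩ ⟨v, hv⟩ from huv).reachable.trans hreach⟩

def leafAncestor (j : Fin (2 ^ h)) (i : ℕ) (hi : i ≤ h) : BT h :=
  ⟨⟨i, by omega⟩, ⟨j / 2 ^ (h - i), by
    rw [Nat.div_lt_iff_lt_mul (by positivity), ← pow_add, Nat.add_sub_cancel' hi]
    exact j.isLt⟩⟩

section leafAncestor

variable (j : Fin (2 ^ h))

lemma leafAncestor_eq_btRoot_iff {i : ℕ} (hi : i ≤ h) :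
    leafAncestor j i hi = btRoot h ↔ i = 0 := by
  refine ⟨fun e => congrArg (fun v : BT h => (v.1 : ℕ)) e, ?_⟩
  rintro rfl
  exact BT.ext rfl (Nat.div_eq_of_lt (by simp))

lemma isParent_leafAncestor_succ (i : ℕ) (hi : i + 1 ≤ h) :
    IsParent (leafAncestor j i (by omega)) (leafAncestor j (i + 1) hi) := by
  refine ⟨rfl, ?_⟩
  change (j : ℕ) / 2 ^ (h - (i + 1)) / 2 = j / 2 ^ (h - i)
  rw [Nat.div_div_eq_div_mul, ← pow_succ]
  congr 3
  omega

lemma leafAncestor_snd_div {k i : ℕ} (hki : k ≤ i) (hi : i ≤ h) :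
    ((leafAncestor j i hi).2 : ℕ) / 2 ^ (i - k) = (leafAncestor j k (hki.trans hi)).2 := by
  change (j : ℕ) / 2 ^ (h - i) / 2 ^ (i - k) = j / 2 ^ (h - k)
  rw [Nat.div_div_eq_div_mul, ← pow_add]
  congr 3
  omega

lemma reachesLeafAvoiding_leafAncestor (S : Set (BT h)) {i : ℕ} (hi : i ≤ h)
    (hS : ∀ l (hl : l ≤ h), i ≤ l → leafAncestor j l hl ∉ S) :
    ReachesLeafAvoiding S (leafAncestor j i hi) := by
  induction hi using Nat.decreasingInduction with
  | self => exact ⟨hS h le_rfl le_rfl, _, hS h le_rfl le_rfl, rfl, .refl _⟩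
  | of_succ i hi ih =>
    exact (ih fun l hl hil => hS l hl (by omega)).of_adj (hS i _ le_rfl)
      (btTree_adj_of_isParent (isParent_leafAncestor_succ j i hi))

lemma exists_deepest_leafAncestor (S : Set (BT h)) :
    ∃ d, ∃ hd : d ≤ h, (leafAncestor j d hd = btRoot h ∨ leafAncestor j d hd ∈ S) ∧
      ∀ i (hi : i ≤ h), d < i → leafAncestor j i hi ∉ S := by
  classical
  let P i := ∃ hi : i ≤ h, leafAncestor j i hi = btRoot h ∨ leafAncestor j i hi ∈ S
  obtain ⟨hd, hblock⟩ : P (Nat.findGreatest P h) :=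
    Nat.findGreatest_spec (Nat.zero_le h)
      ⟨Nat.zero_le h, .inl ((leafAncestor_eq_btRoot_iff j _).2 rfl)⟩
  exact ⟨_, hd, hblock, fun i hi hdi hiS => Nat.findGreatest_is_greatest hdi hi ⟨hi, .inr hiS⟩⟩

end leafAncestor

lemma exists_leaf_forall_deep_leafAncestor_notMem (S : Finset (BT h)) {k : ℕ} (hkh : k ≤ h)
    (hS : S.card < 2 ^ k) :
    ∃ j : Fin (2 ^ h), ∀ i (hi : i ≤ h), k ≤ i → leafAncestor j i hi ∉ S := by
  classical
  -- `s.2 / 2 ^ (s.1 - k)` indexes the depth-`k` ancestor of `s` whenever `k ≤ s.1`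
  obtain ⟨a, ha, haS⟩ := Finset.exists_mem_notMem_of_card_lt_card
    (s := S.image fun s => (s.2 : ℕ) / 2 ^ ((s.1 : ℕ) - k)) (t := Finset.range (2 ^ k))
    (by simpa using Finset.card_image_le.trans_lt hS)
  have hj : a * 2 ^ (h - k) < 2 ^ h := by
    rw [← Nat.add_sub_cancel' hkh, pow_add, Nat.add_sub_cancel_left]
    exact Nat.mul_lt_mul_of_pos_right (Finset.mem_range.1 ha) (by positivity)
  refine ⟨⟨a * 2 ^ (h - k), hj⟩, fun i hi hki hmem => haS (Finset.mem_image.2 ⟨_, hmem, ?_⟩)⟩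
  change _ / 2 ^ (i - k) = a
  rw [leafAncestor_snd_div _ hki hi]
  exact Nat.mul_div_cancel a (by positivity)

theorem exists_child_reachesLeafAvoiding_of_card_lt (S : Finset (BT h)) {k : ℕ} (hk : 1 ≤ k)
    (hkh : k ≤ h) (hS : S.card < 2 ^ k) :
    ∃ v : BT h, (v.1 : ℕ) ≤ k ∧ v ≠ btRoot h ∧
      (∃ p : BT h, IsParent p v ∧ (p ∈ S ∨ p = btRoot h)) ∧
      ReachesLeafAvoiding (S : Set (BT h)) v := by
  obtain ⟨j, hj⟩ := exists_leaf_forall_deep_leafAncestor_notMem S hkh hS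
  obtain ⟨d, hd, hblock, hfree⟩ := exists_deepest_leafAncestor j (S : Set (BT h))
  have hdk : d < k := by
    by_contra! hkd
    rcases hblock with hroot | hmem
    · have := (leafAncestor_eq_btRoot_iff j hd).1 hroot
      omega
    · exact hj d hd hkd hmem
  refine ⟨leafAncestor j (d + 1) (by omega), Nat.succ_le_of_lt hdk,
    fun e => d.succ_ne_zero ((leafAncestor_eq_btRoot_iff j _).1 e),
    ⟨leafAncestor j d hd, isParent_leafAncestor_succ j d _, hblock.symm⟩,
    reachesLeafAvoiding_leafAncestor j _ _ hfree⟩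

theorem stmt6_general (h : ℕ) (hh : 1 ≤ h) (S : Finset (BT h))
    (hS2 : S.card < 2 ^ h) :
    ∃ v : BT h,
      ((v.1 : ℕ) : ℝ) ≤ Real.logb 2 S.card + 1 ∧
      v ≠ btRoot h ∧
      (∃ p : BT h, IsParent p v ∧ (p ∈ S ∨ p = btRoot h)) ∧
      ReachesLeafAvoiding (S : Set (BT h)) v := by
  have hk : S.card < 2 ^ (Nat.log 2 S.card + 1) := Nat.lt_pow_succ_log_self one_lt_two _
  have hkh : Nat.log 2 S.card + 1 ≤ h := by
    rcases Nat.eq_zero_or_pos S.card with h0 | hpos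
    · simpa [h0] using hh
    · exact Nat.log_lt_of_lt_pow hpos.ne' hS2
  obtain ⟨v, hv, hroot, hparent, hreach⟩ :=
    exists_child_reachesLeafAvoiding_of_card_lt S (Nat.succ_pos _) hkh hk
  refine ⟨v, ?_, hroot, hparent, hreach⟩
  calc ((v.1 : ℕ) : ℝ) ≤ (Nat.log 2 S.card : ℝ) + 1 := by exact_mod_cast hv
    _ ≤ Real.logb 2 S.card + 1 := by
      gcongr
      exact_mod_cast Real.natLog_le_logb S.card 2

/-- If `1 ≤ |S| < 2 ^ h`, then `T_h` has a vertex `v` of depth at most `log₂ |S| + 1`,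
distinct from the root, whose parent is in `S ∪ {root}`, such that `T_h − S` contains
a path from `v` to a leaf of `T_h`. -/
theorem stmt6 (h : ℕ) (hh : 1 ≤ h) (S : Finset (BT h))
    (hS1 : 1 ≤ S.card) (hS2 : S.card < 2 ^ h) :
    ∃ v : BT h,
      ((v.1 : ℕ) : ℝ) ≤ Real.logb 2 S.card + 1 ∧
      v ≠ btRoot h ∧
      (∃ p : BT h, IsParent p v ∧ (p ∈ S ∨ p = btRoot h)) ∧
      ReachesLeafAvoiding (S : Set (BT h)) v :=
  stmt6_general h hh S hS2
end

section
/- Let x, y, p ≥ 1 be integers, let G be a graph obtained from the x × y grid G_{x×y} by subdividing some of its horizontal edges (each horizontal edge subdivided zero or more times), and let S ⊆ V(G) \ V(G_{x×y}) be a set of subdivision vertices with |S| < p·y. Then some connected component of G − S contains at least x/p consecutive columns of G_{x×y}. -/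
/-! The gap between columns `i` and `i + 1` separates them in `G - S` only if `S` meets all `y`
horizontal edges there, so fewer than `p` gaps are cut. The cut gaps split the `x` columns into
at most `p` runs of consecutive columns, one of which has at least `x / p` columns; inside a run,
each column is connected to the next through a row whose edge avoids `S`. -/

/-- A graph obtained from the `x × y` grid by subdividing each horizontal edge
`e` (the edge joining `(i, j)` and `(i + 1, j)`, indexed by
`e = (i, j) : Fin (x - 1) × Fin y`) into a path through `n e` new subdivision
vertices.  Vertical edges (between `(i, j)` and `(i, j + 1)`) are kept as they are. -/
def gridSubdiv (x y : ℕ) (n : Fin (x - 1) × Fin y → ℕ) :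
    SimpleGraph ((Fin x × Fin y) ⊕ (Σ e : Fin (x - 1) × Fin y, Fin (n e))) :=
  SimpleGraph.fromRel (fun a b =>
    match a, b with
    | Sum.inl u, Sum.inl v =>
        -- a vertical edge of the grid
        (u.1 = v.1 ∧ (u.2 : ℕ) + 1 = (v.2 : ℕ)) ∨
        -- a horizontal edge of the grid that was not subdivided
        (∃ e : Fin (x - 1) × Fin y, n e = 0 ∧ (u.1 : ℕ) = (e.1 : ℕ) ∧
          (v.1 : ℕ) = (e.1 : ℕ) + 1 ∧ u.2 = e.2 ∧ v.2 = e.2)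
    | Sum.inl u, Sum.inr w =>
        -- a grid vertex joined to the first or the last subdivision vertex of a
        -- subdivided horizontal edge
        ((u.1 : ℕ) = (w.1.1 : ℕ) ∧ u.2 = w.1.2 ∧ (w.2 : ℕ) = 0) ∨
        ((u.1 : ℕ) = (w.1.1 : ℕ) + 1 ∧ u.2 = w.1.2 ∧ (w.2 : ℕ) + 1 = n w.1)
    | Sum.inr _, Sum.inl _ => False
    | Sum.inr w, Sum.inr w' =>
        -- consecutive subdivision vertices on the same horizontal edge
        w.1 = w'.1 ∧ (w.2 : ℕ) + 1 = (w'.2 : ℕ))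

open Finset

theorem exists_uncut_interval (x p : ℕ) (B : Finset ℕ) (hB : #B < p) :
    ∃ a len : ℕ, a + len ≤ x ∧ x ≤ len * p ∧
      ∀ i, a ≤ i → i + 1 < a + len → i ∉ B := by
  have hp : 0 < p := (Nat.zero_le _).trans_lt hB
  -- `f c` counts the cuts below `c`; its fibres are the runs between consecutive cuts
  set f : ℕ → ℕ := fun c => #(B.filter (· < c))
  have hf_mono : Monotone f := fun c d hcd =>
    card_le_card fun t ht => by
      rw [mem_filter] at ht ⊢
      exact ⟨ht.1, ht.2.trans_le hcd⟩
  have hf_lt : ∀ c, f c < p := fun c => (card_filter_le _ _).trans_lt hB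
  have hf_succ : ∀ i ∈ B, f i < f (i + 1) := fun i hi =>
    card_lt_card ⟨fun t ht => by
      rw [mem_filter] at ht ⊢
      exact ⟨ht.1, ht.2.trans i.lt_succ_self⟩,
      fun h => by simpa using h (mem_filter.2 ⟨hi, i.lt_succ_self⟩)⟩
  obtain ⟨v, -, hv⟩ := exists_le_card_fiber_of_nsmul_le_card_of_maps_to
    (s := range x) (t := range p) (b := (x / p : ℚ)) (fun c _ => mem_range.2 (hf_lt c))
    ⟨0, mem_range.2 hp⟩ (by
      rw [nsmul_eq_mul, card_range, card_range, mul_div_cancel₀]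
      exact_mod_cast hp.ne')
  set F := (range x).filter (fun c => f c = v)
  have hF : x ≤ #F * p := by
    rw [div_le_iff₀ (by exact_mod_cast hp)] at hv
    exact_mod_cast hv
  rcases F.eq_empty_or_nonempty with hF0 | hne
  · exact ⟨0, 0, by simp_all⟩
  have hmin := mem_filter.1 (F.min'_mem hne)
  have hmax := mem_filter.1 (F.max'_mem hne)
  have hsub : F ⊆ Icc (F.min' hne) (F.max' hne) := fun c hc =>
    mem_Icc.2 ⟨F.min'_le c hc, F.le_max' c hc⟩
  refine ⟨F.min' hne, F.max' hne + 1 - F.min' hne, ?_, ?_, ?_⟩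
  · have := mem_range.1 hmax.1
    have := F.min'_le _ (F.max'_mem hne)
    omega
  · refine hF.trans (Nat.mul_le_mul_right _ ?_)
    simpa using card_le_card hsub
  · intro i hai hib hiB
    have := hf_mono hai
    have := hf_mono (show i + 1 ≤ F.max' hne by omega)
    have := hf_succ i hiB
    omega

namespace gridSubdiv

variable {x y : ℕ} {n : Fin (x - 1) × Fin y → ℕ}
  (S : Finset (Σ e : Fin (x - 1) × Fin y, Fin (n e)))

def Survivors : Set ((Fin x × Fin y) ⊕ (Σ e : Fin (x - 1) × Fin y, Fin (n e))) :=
  {z | ∀ s ∈ S, z ≠ Sum.inr s}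

lemma inl_mem_survivors (u : Fin x × Fin y) : Sum.inl u ∈ Survivors S :=
  fun _ _ h => Sum.inl_ne_inr h

lemma inr_mem_survivors {w : Σ e : Fin (x - 1) × Fin y, Fin (n e)} (hw : w ∉ S) :
    Sum.inr w ∈ Survivors S :=
  fun _ hs h => hw (Sum.inr_injective h ▸ hs)

def GridReachable (u v : Fin x × Fin y) : Prop :=
  ((gridSubdiv x y n).induce (Survivors S)).Reachable
    ⟨Sum.inl u, inl_mem_survivors S u⟩ ⟨Sum.inl v, inl_mem_survivors S v⟩

def IsCutGap (i : Fin (x - 1)) : Prop :=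
  ∀ j : Fin y, ∃ s ∈ S, s.1 = (i, j)

variable {S}

lemma GridReachable.trans {u v w : Fin x × Fin y} (h : GridReachable S u v)
    (h' : GridReachable S v w) : GridReachable S u w :=
  SimpleGraph.Reachable.trans h h'

lemma GridReachable.symm {u v : Fin x × Fin y} (h : GridReachable S u v) :
    GridReachable S v u :=
  SimpleGraph.Reachable.symm h

lemma gridReachable_column (i : Fin x) (j j' : Fin y) : GridReachable S (i, j) (i, j') := by
  suffices h : ∀ k (hk : k < y),
      GridReachable S (i, ⟨0, (Nat.zero_le k).trans_lt hk⟩) (i, ⟨k, hk⟩) from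
    (h j j.isLt).symm.trans (h j' j'.isLt)
  intro k
  induction k with
  | zero => exact fun _ => SimpleGraph.Reachable.refl _
  | succ k ih =>
    refine fun hk => (ih (by omega)).trans (SimpleGraph.Adj.reachable ?_)
    show (gridSubdiv x y n).Adj (Sum.inl (i, ⟨k, _⟩)) (Sum.inl (i, ⟨k + 1, hk⟩))
    rw [gridSubdiv, SimpleGraph.fromRel_adj]
    exact ⟨by simp, Or.inl (Or.inl ⟨rfl, rfl⟩)⟩

lemma gridReachable_of_edge_disjoint {e : Fin (x - 1) × Fin y} (he : ∀ s ∈ S, s.1 ≠ e)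
    {u v : Fin x × Fin y} (hu : (u.1 : ℕ) = e.1 ∧ u.2 = e.2)
    (hv : (v.1 : ℕ) = e.1 + 1 ∧ v.2 = e.2) : GridReachable S u v := by
  have hsurv : ∀ t : Fin (n e), Sum.inr ⟨e, t⟩ ∈ Survivors S :=
    fun t => inr_mem_survivors S fun ht => he _ ht rfl
  rcases Nat.eq_zero_or_pos (n e) with hn | hn
  · apply SimpleGraph.Adj.reachable
    show (gridSubdiv x y n).Adj (Sum.inl u) (Sum.inl v)
    rw [gridSubdiv, SimpleGraph.fromRel_adj]
    refine ⟨fun h => ?_, Or.inl (Or.inr ⟨e, hn, hu.1, hv.1, hu.2, hv.2⟩)⟩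
    obtain rfl := Sum.inl_injective h
    omega
  have hpath : ∀ k (hk : k < n e), ((gridSubdiv x y n).induce (Survivors S)).Reachable
      ⟨Sum.inl u, inl_mem_survivors S u⟩ ⟨Sum.inr ⟨e, ⟨k, hk⟩⟩, hsurv _⟩ := by
    intro k
    induction k with
    | zero =>
      refine fun hk => SimpleGraph.Adj.reachable ?_
      show (gridSubdiv x y n).Adj (Sum.inl u) (Sum.inr ⟨e, ⟨0, hk⟩⟩)
      rw [gridSubdiv, SimpleGraph.fromRel_adj]
      exact ⟨Sum.inl_ne_inr, Or.inl (Or.inl ⟨hu.1, hu.2, rfl⟩)⟩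
    | succ k ih =>
      refine fun hk => (ih (by omega)).trans (SimpleGraph.Adj.reachable ?_)
      show (gridSubdiv x y n).Adj (Sum.inr ⟨e, ⟨k, _⟩⟩) (Sum.inr ⟨e, ⟨k + 1, hk⟩⟩)
      rw [gridSubdiv, SimpleGraph.fromRel_adj]
      exact ⟨by simp, Or.inl ⟨rfl, rfl⟩⟩
  refine (hpath (n e - 1) (by omega)).trans (SimpleGraph.Adj.reachable ?_)
  show (gridSubdiv x y n).Adj (Sum.inr ⟨e, ⟨n e - 1, _⟩⟩) (Sum.inl v)
  rw [gridSubdiv, SimpleGraph.fromRel_adj]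
  exact ⟨Sum.inr_ne_inl, Or.inr (Or.inr ⟨hv.1, hv.2, by simp only; omega⟩)⟩

variable (S) in
open Classical in
noncomputable def cutGaps : Finset (Fin (x - 1)) := {i | IsCutGap S i}

lemma mem_cutGaps {i : Fin (x - 1)} : i ∈ cutGaps S ↔ IsCutGap S i := by
  simp [cutGaps]

variable (S) in
lemma card_cutGaps_mul_le : #(cutGaps S) * y ≤ #S :=
  calc #(cutGaps S) * y = #(cutGaps S ×ˢ (univ : Finset (Fin y))) := by simp
    _ ≤ #(S.image Sigma.fst) := card_le_card fun q hq => by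
        obtain ⟨s, hs, hse⟩ := mem_cutGaps.1 (mem_product.1 hq).1 q.2
        exact mem_image.2 ⟨s, hs, hse⟩
    _ ≤ #S := card_image_le

lemma gridReachable_of_forall_not_isCutGap {c d : Fin x} (hcd : c ≤ d)
    (h : ∀ i : Fin (x - 1), (c : ℕ) ≤ i → (i : ℕ) < d → ¬ IsCutGap S i)
    (j j' : Fin y) :
    GridReachable S (c, j) (d, j') := by
  obtain ⟨k, hk⟩ := Nat.exists_eq_add_of_le hcd
  induction k generalizing d j' with
  | zero =>
    obtain rfl : d = c := Fin.ext hk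
    exact gridReachable_column d j j'
  | succ k ih =>
    have hi : (c : ℕ) + k < x - 1 := by omega
    obtain ⟨r, hr⟩ : ∃ r : Fin y, ∀ s ∈ S, s.1 ≠ (⟨c + k, hi⟩, r) := by
      simpa only [IsCutGap, not_forall, not_exists, not_and] using
        h ⟨c + k, hi⟩ (Nat.le_add_right _ _) (show (c : ℕ) + k < d by omega)
    have hprev : GridReachable S (c, j) (⟨c + k, by omega⟩, r) :=
      ih (Fin.mk_le_mk.2 (by omega)) (fun i hi hi' => h i hi (by simp only at hi'; omega)) r rfl
    exact hprev.trans ((gridReachable_of_edge_disjoint hr ⟨rfl, rfl⟩ ⟨by omega, rfl⟩).trans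
      (gridReachable_column d r j'))

lemma gridReachable_of_mem_interval {a len : ℕ}
    (h : ∀ i : Fin (x - 1), a ≤ i → (i : ℕ) + 1 < a + len → ¬ IsCutGap S i)
    {u v : Fin x × Fin y} (hu : a ≤ u.1) (hu' : (u.1 : ℕ) < a + len) (hv : a ≤ v.1)
    (hv' : (v.1 : ℕ) < a + len) : GridReachable S u v := by
  wlog huv : u.1 ≤ v.1 generalizing u v
  · exact (this hv hv' hu hu' (le_of_not_ge huv)).symm
  exact gridReachable_of_forall_not_isCutGap huv
    (fun i hi hi' => h i (by omega) (by omega)) u.2 v.2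

end gridSubdiv

open gridSubdiv in
theorem stmt8_general (x y p : ℕ)
    (n : Fin (x - 1) × Fin y → ℕ)
    (S : Finset (Σ e : Fin (x - 1) × Fin y, Fin (n e)))
    (hS : S.card < p * y) :
    ∃ a len : ℕ, a + len ≤ x ∧ x ≤ len * p ∧
      ∀ u v : Fin x × Fin y,
        a ≤ (u.1 : ℕ) → (u.1 : ℕ) < a + len → a ≤ (v.1 : ℕ) → (v.1 : ℕ) < a + len →
        ∃ (hu : Sum.inl u ∈ {z : (Fin x × Fin y) ⊕ (Σ e : Fin (x - 1) × Fin y, Fin (n e)) |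
              ∀ s ∈ S, z ≠ Sum.inr s})
          (hv : Sum.inl v ∈ {z : (Fin x × Fin y) ⊕ (Σ e : Fin (x - 1) × Fin y, Fin (n e)) |
              ∀ s ∈ S, z ≠ Sum.inr s}),
          ((gridSubdiv x y n).induce
            {z | ∀ s ∈ S, z ≠ Sum.inr s}).Reachable ⟨Sum.inl u, hu⟩ ⟨Sum.inl v, hv⟩ := by
  have hcut : #(cutGaps S) < p :=
    Nat.lt_of_mul_lt_mul_right ((card_cutGaps_mul_le S).trans_lt hS)
  obtain ⟨a, len, hax, hlen, huncut⟩ :=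
    exists_uncut_interval x p ((cutGaps S).map Fin.valEmbedding) (by rwa [card_map])
  refine ⟨a, len, hax, hlen, fun u v hu hu' hv hv' =>
    ⟨inl_mem_survivors S u, inl_mem_survivors S v, ?_⟩⟩
  exact gridReachable_of_mem_interval
    (fun i hi hi' hc => huncut i hi hi' (mem_map_of_mem _ (mem_cutGaps.2 hc))) hu hu' hv hv'

/-- If `G` is obtained from the `x × y` grid by subdividing horizontal edges and `S`
is a set of fewer than `p * y` subdivision vertices, then some component of `G − S`
contains at least `x / p` consecutive columns of the grid. -/
theorem stmt8 (x y p : ℕ) (hx : 1 ≤ x) (hy : 1 ≤ y) (hp : 1 ≤ p)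
    (n : Fin (x - 1) × Fin y → ℕ)
    (S : Finset (Σ e : Fin (x - 1) × Fin y, Fin (n e)))
    (hS : S.card < p * y) :
    ∃ a len : ℕ, a + len ≤ x ∧ x ≤ len * p ∧
      ∀ u v : Fin x × Fin y,
        a ≤ (u.1 : ℕ) → (u.1 : ℕ) < a + len → a ≤ (v.1 : ℕ) → (v.1 : ℕ) < a + len →
        ∃ (hu : Sum.inl u ∈ {z : (Fin x × Fin y) ⊕ (Σ e : Fin (x - 1) × Fin y, Fin (n e)) |
              ∀ s ∈ S, z ≠ Sum.inr s})
          (hv : Sum.inl v ∈ {z : (Fin x × Fin y) ⊕ (Σ e : Fin (x - 1) × Fin y, Fin (n e)) |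
              ∀ s ∈ S, z ≠ Sum.inr s}),
          ((gridSubdiv x y n).induce
            {z | ∀ s ∈ S, z ≠ Sum.inr s}).Reachable ⟨Sum.inl u, hu⟩ ⟨Sum.inl v, hv⟩ :=
  stmt8_general x y p n S hS
end

section
/- Let h ≥ 1 and let S ⊆ V(G_h) be nonempty. If no connected component of G_h − S has more than |V(G_h)|/2 vertices, then S contains at least one vertex of depth i for every i ∈ {i₀, …, h}, where i₀ := ⌈max{2·log₂|S| + 2, log₂(1 + (h+2)·|S|) − 1}⌉. -/
/- If `S` misses depth `i`, every vertex of depth `≥ i` with no ancestor of depth `≥ i` in `S`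
is joined to the leftmost vertex of depth `i` by walking along the path `D_i` and down the tree,
so these vertices lie in a single component of `G_h − S` and there are fewer than `2 ^ h` of
them. All other vertices of depth `≥ i` descend from one of the vertices of `S` of depth `> i`,
each of which has fewer than `2 ^ (h - i)` descendants. Since `2 log₂ |S| + 2 ≤ i` means
`4 |S| ≤ 2 ^ i`, the `2 ^ (h + 1) - 2 ^ i` vertices of depth `≥ i` cannot be covered
this way. -/

open Finset

lemma four_mul_le_two_pow_of_two_mul_logb_add_two_le {n i : ℕ}
    (hn : 2 * Real.logb 2 n + 2 ≤ i) : 4 * n ≤ 2 ^ i := by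
  rcases Nat.eq_zero_or_pos n with rfl | hpos
  · simp
  have hn' : (0 : ℝ) < n := by exact_mod_cast hpos
  have hsq : ((4 * n ^ 2 : ℕ) : ℝ) ≤ ((2 ^ i : ℕ) : ℝ) := by
    calc ((4 * n ^ 2 : ℕ) : ℝ) = (2 : ℝ) ^ (Real.logb 2 n * 2 + 2) := by
          rw [Real.rpow_add two_pos, Real.rpow_mul zero_le_two,
            Real.rpow_logb two_pos (by norm_num) hn', Real.rpow_two, Real.rpow_two]
          push_cast; ring
      _ ≤ (2 : ℝ) ^ (i : ℝ) := Real.rpow_le_rpow_of_exponent_le one_le_two (by linarith)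
      _ = ((2 ^ i : ℕ) : ℝ) := by norm_cast
  have : 4 * n ≤ 4 * n ^ 2 := by nlinarith
  exact_mod_cast this.trans (by exact_mod_cast hsq)

lemma mul_two_pow_sub_one_add_two_pow_le {s i h : ℕ} (hi : i ≤ h) (hs : 4 * s ≤ 2 ^ i) :
    s * (2 ^ (h - i) - 1) + 2 ^ i ≤ 2 ^ h := by
  obtain rfl | hlt := hi.eq_or_lt
  · simp
  obtain ⟨k, rfl⟩ := Nat.exists_eq_add_of_lt hlt
  have hk : 1 ≤ 2 ^ k := Nat.one_le_two_pow
  rw [show i + k + 1 - i = k + 1 by omega, pow_succ, pow_succ, pow_add]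
  have : s * (2 ^ k * 2 - 1) ≤ s * (2 ^ k * 2) := Nat.mul_le_mul_left _ (Nat.sub_le _ _)
  nlinarith [Nat.mul_le_mul_right (2 ^ k) hs]

lemma sum_Ico_two_pow_add {i n : ℕ} (hin : i ≤ n) :
    ∑ k ∈ Ico i n, 2 ^ k + 2 ^ i = 2 ^ n := by
  induction n, hin using Nat.le_induction with
  | base => simp
  | succ n hin ih => rw [sum_Ico_succ_top hin, pow_succ]; omega

section Tree

variable {h : ℕ}

instance (a v : BT h) : Decidable (IsAncestor a v) :=
  inferInstanceAs (Decidable (_ ∧ _))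

lemma BT.ext_val {v w : BT h} (h₁ : (v.1 : ℕ) = w.1) (h₂ : (v.2 : ℕ) = w.2) :
    v = w :=
  Sigma.ext (Fin.ext h₁) ((Fin.heq_ext_iff (by rw [Fin.ext h₁])).2 h₂)

lemma isAncestor_refl (v : BT h) : IsAncestor v v :=
  ⟨le_rfl, by simp⟩

lemma IsAncestor.trans {a b c : BT h} (hab : IsAncestor a b) (hbc : IsAncestor b c) :
    IsAncestor a c := by
  obtain ⟨hab, e₁⟩ := hab
  obtain ⟨hbc, e₂⟩ := hbc
  refine ⟨hab.trans hbc, ?_⟩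
  rw [e₁, e₂, Nat.div_div_eq_div_mul, ← pow_add]
  congr 2
  omega

lemma IsParent.isAncestor {p v : BT h} (hp : IsParent p v) : IsAncestor p v := by
  obtain ⟨hd, hj⟩ := hp
  exact ⟨by omega, by rw [show (v.1 : ℕ) - p.1 = 1 by omega, pow_one, hj]⟩

lemma exists_isParent (v : BT h) (hv : 1 ≤ (v.1 : ℕ)) : ∃ p, IsParent p v := by
  have hd : (v.1 : ℕ) - 1 < h + 1 := by have := v.1.isLt; omega
  have hj : (v.2 : ℕ) / 2 < 2 ^ ((v.1 : ℕ) - 1) := by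
    have : (v.2 : ℕ) < 2 ^ ((v.1 : ℕ) - 1) * 2 := by
      rw [← pow_succ, Nat.sub_add_cancel hv]
      exact v.2.isLt
    omega
  exact ⟨⟨⟨_, hd⟩, ⟨_, hj⟩⟩, by simp only; omega, rfl⟩

lemma gGraph_adj_of_isParent {p v : BT h} (hp : IsParent p v) : (gGraph h).Adj p v := by
  refine (SimpleGraph.fromRel_adj _ _ _).2 ⟨fun hpv => ?_, .inl (.inl hp)⟩
  have := hp.1
  rw [hpv] at this
  omega

lemma gGraph_adj_of_index_succ {u v : BT h} (hd : (u.1 : ℕ) = v.1) (hj : (u.2 : ℕ) + 1 = v.2) :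
    (gGraph h).Adj u v := by
  refine (SimpleGraph.fromRel_adj _ _ _).2 ⟨fun huv => ?_, .inl (.inr ⟨hd, hj⟩)⟩
  rw [huv] at hj
  omega

end Tree

lemma card_depth_ge_add_two_pow {h i : ℕ} (hi : i ≤ h + 1) :
    #{v : BT h | i ≤ (v.1 : ℕ)} + 2 ^ i = 2 ^ (h + 1) := by
  have hsigma : ({v : BT h | i ≤ (v.1 : ℕ)} : Finset (BT h))
      = ({d : Fin (h + 1) | i ≤ (d : ℕ)} : Finset _).sigma fun _ => univ := by
    ext ⟨d, j⟩; simp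
  have hIco : {k ∈ range (h + 1) | i ≤ k} = Ico i (h + 1) := by
    ext k; simp only [mem_filter, mem_range, mem_Ico]; omega
  rw [hsigma, card_sigma]
  simp only [card_univ, Fintype.card_fin]
  rw [sum_filter, Fin.sum_univ_eq_sum_range (fun k => if i ≤ k then 2 ^ k else 0), ← sum_filter,
    hIco, sum_Ico_two_pow_add hi]

lemma card_bt_add_one (h : ℕ) : Fintype.card (BT h) + 1 = 2 ^ (h + 1) := by
  simpa using card_depth_ge_add_two_pow (h := h) (i := 0) (by omega)

lemma card_isAncestor_add_one_le {h : ℕ} (a : BT h) :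
    #{v | IsAncestor a v} + 1 ≤ 2 ^ (h + 1 - (a.1 : ℕ)) := by
  -- a descendant of `a` is determined by its depth below `a` and its index modulo the width
  let f : BT h → BT (h - (a.1 : ℕ)) := fun v =>
    ⟨⟨(v.1 : ℕ) - a.1, by have := v.1.isLt; omega⟩,
      ⟨v.2 % 2 ^ ((v.1 : ℕ) - a.1), Nat.mod_lt _ (by positivity)⟩⟩
  have hf : Set.InjOn f {v | IsAncestor a v} := by
    rintro v ⟨hv, hva⟩ w ⟨hw, hwa⟩ hvw
    have h₁ : (v.1 : ℕ) = w.1 := by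
      have := congrArg (fun z : BT (h - (a.1 : ℕ)) => (z.1 : ℕ)) hvw
      simp only [f] at this
      omega
    have h₂ := congrArg (fun z : BT (h - (a.1 : ℕ)) => (z.2 : ℕ)) hvw
    simp only [f] at h₂
    have hwidth : 2 ^ ((v.1 : ℕ) - a.1) = 2 ^ ((w.1 : ℕ) - a.1) := by rw [h₁]
    rw [hwidth] at h₂ hva
    exact BT.ext_val h₁ (Nat.ext_div_modEq (hva.symm.trans hwa) h₂)
  calc #{v | IsAncestor a v} + 1 ≤ #(univ : Finset (BT (h - (a.1 : ℕ)))) + 1 := by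
        gcongr
        exact card_le_card_of_injOn f (fun _ _ => mem_univ _) (by simpa using hf)
    _ = 2 ^ (h + 1 - a.1) := by
        rw [card_univ, card_bt_add_one, show h - a.1 + 1 = h + 1 - a.1 by omega]

lemma SimpleGraph.ConnectedComponent.mem_image_val_supp_of_adj {V : Type*} {G : SimpleGraph V}
    {s : Set V} {C : (G.induce s).ConnectedComponent} {u v : V}
    (hu : u ∈ Subtype.val '' C.supp) (hv : v ∈ s) (huv : G.Adj u v) :
    v ∈ Subtype.val '' C.supp := by
  obtain ⟨u, hu, rfl⟩ := hu
  exact ⟨⟨v, hv⟩, (C.mem_supp_congr_adj (v := u) (w := ⟨v, hv⟩) huv).1 hu, rfl⟩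

def unblockedBelow {h : ℕ} (S : Finset (BT h)) (i : ℕ) : Finset (BT h) :=
  {v | i ≤ (v.1 : ℕ) ∧ ∀ a ∈ S, IsAncestor a v → (a.1 : ℕ) < i}

section MissedDepth

open SimpleGraph

variable {h : ℕ} {S : Finset (BT h)} {i : ℕ}

lemma exists_connectedComponent_unblockedBelow_subset (hi : i ≤ h)
    (hS : ∀ v ∈ S, (v.1 : ℕ) ≠ i) :
    ∃ C : ((gGraph h).induce {u | u ∉ S}).ConnectedComponent,
      (unblockedBelow S i : Set (BT h)) ⊆ Subtype.val '' C.supp := by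
  let row (j : ℕ) (hj : j < 2 ^ i) : BT h := ⟨⟨i, by omega⟩, ⟨j, hj⟩⟩
  have hrowS (j : ℕ) (hj : j < 2 ^ i) : row j hj ∉ S := fun hmem => hS _ hmem rfl
  let C := ((gGraph h).induce {u | u ∉ S}).connectedComponentMk
    ⟨row 0 (by positivity), hrowS _ _⟩
  refine ⟨C, ?_⟩
  have hrow (j : ℕ) (hj : j < 2 ^ i) : row j hj ∈ Subtype.val '' C.supp := by
    induction j with
    | zero => exact ⟨_, rfl, rfl⟩
    | succ j ih =>
      exact ConnectedComponent.mem_image_val_supp_of_adj (ih (by omega)) (hrowS _ _)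
        (gGraph_adj_of_index_succ rfl rfl)
  have hcol (n : ℕ) :
      ∀ v ∈ unblockedBelow S i, (v.1 : ℕ) = i + n → v ∈ Subtype.val '' C.supp := by
    induction n with
    | zero =>
      rintro ⟨⟨d, hd⟩, j⟩ - (rfl : d = i)
      exact hrow j j.isLt
    | succ n ih =>
      intro v hv hdepth
      simp only [unblockedBelow, mem_filter, mem_univ, true_and] at hv
      obtain ⟨p, hp⟩ := exists_isParent v (by omega)
      have hp_mem : p ∈ unblockedBelow S i := by
        simp only [unblockedBelow, mem_filter, mem_univ, true_and]
        exact ⟨by have := hp.1; omega, fun a ha hap => hv.2 a ha (hap.trans hp.isAncestor)⟩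
      have hvS : v ∉ S := fun hvS => (hv.2 v hvS (isAncestor_refl v)).not_ge hv.1
      exact ConnectedComponent.mem_image_val_supp_of_adj (ih p hp_mem (by have := hp.1; omega))
        hvS (gGraph_adj_of_isParent hp)
  intro v hv
  have hdepth : i ≤ (v.1 : ℕ) := (mem_filter.1 hv).2.1
  exact hcol ((v.1 : ℕ) - i) v hv (by omega)

lemma card_depth_ge_le_card_unblockedBelow_add (hS : ∀ v ∈ S, (v.1 : ℕ) ≠ i) :
    #{v : BT h | i ≤ (v.1 : ℕ)} ≤ #(unblockedBelow S i) + #S * (2 ^ (h - i) - 1) := by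
  let deep := {a ∈ S | i < (a.1 : ℕ)}
  have hcover : ({v : BT h | i ≤ (v.1 : ℕ)} : Finset (BT h))
      ⊆ unblockedBelow S i ∪ deep.biUnion fun a => {v | IsAncestor a v} := by
    intro v hv
    simp only [unblockedBelow, deep, mem_union, mem_filter, mem_univ, true_and, mem_biUnion]
      at hv ⊢
    by_cases hfree : ∀ a ∈ S, IsAncestor a v → (a.1 : ℕ) < i
    · exact .inl ⟨hv, hfree⟩
    · push Not at hfree
      obtain ⟨a, haS, hav, hai⟩ := hfree
      exact .inr ⟨a, ⟨haS, lt_of_le_of_ne hai (hS a haS).symm⟩, hav⟩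
  have hdesc : ∀ a ∈ deep, #{v | IsAncestor a v} ≤ 2 ^ (h - i) - 1 := by
    intro a ha
    have hai : i < (a.1 : ℕ) := (mem_filter.1 ha).2
    have := card_isAncestor_add_one_le a
    have : 2 ^ (h + 1 - (a.1 : ℕ)) ≤ 2 ^ (h - i) := Nat.pow_le_pow_right two_pos (by omega)
    omega
  calc #{v : BT h | i ≤ (v.1 : ℕ)}
      ≤ #(unblockedBelow S i) + #(deep.biUnion fun a => {v | IsAncestor a v}) :=
        (card_le_card hcover).trans (card_union_le _ _)
    _ ≤ #(unblockedBelow S i) + #deep * (2 ^ (h - i) - 1) := by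
        gcongr; exact card_biUnion_le_card_mul _ _ _ hdesc
    _ ≤ #(unblockedBelow S i) + #S * (2 ^ (h - i) - 1) := by
        gcongr; exact filter_subset _ _

end MissedDepth

theorem stmt10_general (h : ℕ) (S : Finset (BT h))
    (hcomp : ∀ C : ((gGraph h).induce {u : BT h | u ∉ S}).ConnectedComponent,
      C.supp.ncard * 2 ≤ 2 ^ (h + 1) - 1)
    (i : ℕ) (hi : i ≤ h)
    (hi0 : max (2 * Real.logb 2 S.card + 2)
      (Real.logb 2 (1 + ((h : ℝ) + 2) * S.card) - 1) ≤ (i : ℝ)) :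
    ∃ v ∈ S, (v.1 : ℕ) = i := by
  by_contra! hS
  obtain ⟨C, hC⟩ := exists_connectedComponent_unblockedBelow_subset hi hS
  have hunblocked : #(unblockedBelow S i) ≤ C.supp.ncard := by
    rw [← Set.ncard_coe_finset, ← Set.ncard_image_of_injective _ Subtype.val_injective]
    exact Set.ncard_le_ncard hC
  have hcomp_C := hcomp C
  have hcover := card_depth_ge_le_card_unblockedBelow_add hS
  have hdepth := card_depth_ge_add_two_pow (h := h) (by omega : i ≤ h + 1)
  have hS_small := mul_two_pow_sub_one_add_two_pow_le hi
    (four_mul_le_two_pow_of_two_mul_logb_add_two_le ((le_max_left _ _).trans hi0))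
  have hI : 1 ≤ 2 ^ i := Nat.one_le_two_pow
  omega

/-- If `S ⊆ V(G_h)` is nonempty and no component of `G_h − S` has more than
`|V(G_h)| / 2 = (2 ^ (h + 1) - 1) / 2` vertices, then `S` contains a vertex of depth
`i` for every `i ∈ {i₀, …, h}` with
`i₀ = ⌈max (2 log₂ |S| + 2) (log₂ (1 + (h + 2) |S|) - 1)⌉`. -/
theorem stmt10 (h : ℕ) (hh : 1 ≤ h) (S : Finset (BT h)) (hS : S.Nonempty)
    (hcomp : ∀ C : ((gGraph h).induce {u : BT h | u ∉ S}).ConnectedComponent,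
      C.supp.ncard * 2 ≤ 2 ^ (h + 1) - 1)
    (i : ℕ) (hi : i ≤ h)
    (hi0 : max (2 * Real.logb 2 S.card + 2)
      (Real.logb 2 (1 + ((h : ℝ) + 2) * S.card) - 1) ≤ (i : ℝ)) :
    ∃ v ∈ S, (v.1 : ℕ) = i :=
  stmt10_general h S hcomp i hi hi0
end

section
/- For every graph G and every tree-partition {B_x : x ∈ V(T)} of G, there exists a node x ∈ V(T) such that no connected component of G − B_x has more than |V(G)|/2 vertices. -/
/-!
Suppose every part `B x` leaves a component `C x` of `G − B x` with more than half of the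
vertices; any two of them meet. The parts met by a connected set of vertices avoiding `B x` lie
in one component of `T − x`, and for an edge `zy` of a tree the component of `T − z` containing
`y` and the component of `T − y` containing `z` are disjoint. Take `C x₀` of minimum size, a
vertex `v₀ ∈ C x₀` in the part `B s₀`, and among the nodes `z` with `C z = C x₀` one closest to
`s₀`; let `y` be the neighbour of `z` towards `s₀`. The parts met by `C z` lie on the side of `y`
in `T − z`; if `C y` met `B z`, the parts it shares with `C z` would lie on the side of `z` in
`T − y`. So `C y` avoids `B z`, hence `C y ⊆ C z`; by minimality `C y = C z`, although `y` is
closer to `s₀`.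
-/

open SimpleGraph

namespace SimpleGraph

variable {V W : Type*} {G : SimpleGraph V} {H : SimpleGraph W}

theorem Reachable.map_of_eq_or_adj {f : V → W}
    (hf : ∀ ⦃a b⦄, G.Adj a b → f a = f b ∨ H.Adj (f a) (f b)) {u v : V}
    (h : G.Reachable u v) : H.Reachable (f u) (f v) := by
  obtain ⟨p⟩ := h
  induction p with
  | nil => rfl
  | cons hadj _ ih =>
    rcases hf hadj with heq | hadj'
    · rwa [heq]
    · exact hadj'.reachable.trans ih

theorem Walk.reachable_deleteIncidenceSet {x u v : V} (p : G.Walk u v) (hx : x ∉ p.support) :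
    (G.deleteIncidenceSet x).Reachable u v := by
  induction p with
  | nil => rfl
  | @cons _ b _ hadj p ih =>
    rw [Walk.support_cons, List.mem_cons, not_or] at hx
    have hb : b ≠ x := fun h => hx.2 (h ▸ p.start_mem_support)
    exact (deleteIncidenceSet_adj.2 ⟨hadj, Ne.symm hx.1, hb⟩).reachable.trans (ih hx.2)

theorem Connected.exists_adj_reachable_deleteIncidenceSet_dist_lt (hG : G.Connected) {u v : V}
    (huv : u ≠ v) :
    ∃ w, G.Adj u w ∧ (G.deleteIncidenceSet u).Reachable w v ∧ G.dist w v < G.dist u v := by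
  obtain ⟨p, hp, hlen⟩ := hG.exists_path_of_dist u v
  obtain ⟨w, hadj, q, rfl⟩ := p.exists_eq_cons_of_ne huv
  rw [Walk.cons_isPath_iff] at hp
  refine ⟨w, hadj, q.reachable_deleteIncidenceSet hp.2, ?_⟩
  rw [← hlen, Walk.length_cons]
  exact Nat.lt_succ_of_le (dist_le q)

theorem IsAcyclic.not_reachable_deleteIncidenceSet (hG : G.IsAcyclic) {u v w : V}
    (huv : G.Adj u v) (hv : (G.deleteIncidenceSet u).Reachable v w) :
    ¬ (G.deleteIncidenceSet v).Reachable u w := by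
  intro hu
  have hle : ∀ x, x = u ∨ x = v → G.deleteIncidenceSet x ≤ G.deleteEdges {s(u, v)} := by
    intro x hx a b hab
    rw [deleteIncidenceSet_adj] at hab
    rw [deleteEdges_adj, Set.mem_singleton_iff, Sym2.eq_iff]
    grind
  exact isAcyclic_iff_forall_adj_isBridge.mp hG huv
    ((hu.mono (hle v (.inr rfl))).trans (hv.mono (hle u (.inl rfl))).symm)

theorem ConnectedComponent.image_val_supp_subset {s t : Set V}
    {C : (G.induce s).ConnectedComponent} {D : (G.induce t).ConnectedComponent}
    (hCt : Subtype.val '' C.supp ⊆ t)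
    (hCD : (Subtype.val '' C.supp ∩ Subtype.val '' D.supp).Nonempty) :
    Subtype.val '' C.supp ⊆ Subtype.val '' D.supp := by
  obtain ⟨_, ⟨u, huC, rfl⟩, ⟨u', huD, hu'⟩⟩ := hCD
  rintro _ ⟨v, hvC, rfl⟩
  let f : C.toSimpleGraph →g G.induce t :=
    { toFun := fun w => ⟨w.1.1, hCt ⟨w.1, w.2, rfl⟩⟩, map_rel' := id }
  refine ⟨f ⟨v, hvC⟩, ?_, rfl⟩
  have hu : u' = f ⟨u, huC⟩ := Subtype.ext hu'
  rw [ConnectedComponent.mem_supp_iff] at huD ⊢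
  rw [← huD, hu]
  exact (ConnectedComponent.sound ((C.reachable_toSimpleGraph huC hvC).map f)).symm

end SimpleGraph

namespace IsHPartition

variable {α ι : Type*} {G : SimpleGraph α} {T : SimpleGraph ι} {B : ι → Set α}

noncomputable def part (hB : IsHPartition G T B) (v : α) : ι :=
  (hB.1 v).exists.choose

theorem mem_part (hB : IsHPartition G T B) (v : α) : v ∈ B (hB.part v) :=
  (hB.1 v).exists.choose_spec

theorem part_eq_iff (hB : IsHPartition G T B) {v : α} {x : ι} : hB.part v = x ↔ v ∈ B x :=
  ⟨fun h => h ▸ hB.mem_part v, fun h => (hB.1 v).unique (hB.mem_part v) h⟩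

theorem reachable_deleteIncidenceSet_part (hB : IsHPartition G T B) {x : ι}
    {u v : {v | v ∉ B x}} (h : (G.induce {v | v ∉ B x}).Reachable u v) :
    (T.deleteIncidenceSet x).Reachable (hB.part u) (hB.part v) :=
  h.map_of_eq_or_adj (f := fun w : {v | v ∉ B x} => hB.part w) fun a b hab =>
    (hB.2 hab (hB.mem_part a) (hB.mem_part b)).imp_right fun hT =>
      deleteIncidenceSet_adj.2 ⟨hT, mt hB.part_eq_iff.1 a.2, mt hB.part_eq_iff.1 b.2⟩

theorem image_supp_subset_of_adj (hB : IsHPartition G T B) (hT : T.IsAcyclic) {z y : ι}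
    (hzy : T.Adj z y) {C : (G.induce {v | v ∉ B z}).ConnectedComponent}
    {D : (G.induce {v | v ∉ B y}).ConnectedComponent}
    (hDC : (Subtype.val '' D.supp ∩ Subtype.val '' C.supp).Nonempty) {v₀ : α}
    (hv₀ : v₀ ∈ Subtype.val '' C.supp) (hy : (T.deleteIncidenceSet z).Reachable y (hB.part v₀)) :
    Subtype.val '' D.supp ⊆ Subtype.val '' C.supp := by
  refine ConnectedComponent.image_val_supp_subset ?_ hDC
  obtain ⟨_, ⟨u, huD, rfl⟩, ⟨u', huC, hu'⟩⟩ := hDC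
  obtain ⟨v₀, hv₀C, rfl⟩ := hv₀
  rintro _ ⟨w, hwD, rfl⟩ (hwz : w.1 ∈ B z)
  have hzu := hB.reachable_deleteIncidenceSet_part (D.reachable_of_mem_supp hwD huD)
  have hv₀u := hB.reachable_deleteIncidenceSet_part (C.reachable_of_mem_supp hv₀C huC)
  rw [hB.part_eq_iff.2 hwz] at hzu
  rw [hu'] at hv₀u
  exact hT.not_reachable_deleteIncidenceSet hzy (hy.trans hv₀u) hzu

end IsHPartition

/-- For every graph `G` and every tree-partition `{B x : x ∈ V(T)}` of `G` there is a
node `x` such that no component of `G − B x` has more than `|V(G)| / 2` vertices. -/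
theorem stmt14 {α ι : Type} [Fintype α] (G : SimpleGraph α)
    (T : SimpleGraph ι) (hT : T.IsTree) (B : ι → Set α)
    (hB : IsHPartition G T B) :
    ∃ x : ι, ∀ C : (G.induce {v : α | v ∉ B x}).ConnectedComponent,
      C.supp.ncard * 2 ≤ Fintype.card α := by
  by_contra! hlarge
  choose C hC using hlarge
  let F x := Subtype.val '' (C x).supp
  have hmeet : ∀ x y, (F x ∩ F y).Nonempty := fun x y => by
    have hx := hC x
    have hy := hC y
    refine Set.nonempty_inter_of_lt_ncard_add_ncard ?_
    simp only [F, Set.ncard_image_of_injective _ Subtype.val_injective, Nat.card_eq_fintype_card]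
    omega
  have : Nonempty ι := hT.connected.nonempty
  let x₀ := Function.argmin fun x => (F x).ncard
  obtain ⟨v₀, hv₀, -⟩ := hmeet x₀ x₀
  let s₀ := hB.part v₀
  have hne : {z | F z = F x₀}.Nonempty := ⟨x₀, rfl⟩
  let z := Function.argminOn (fun z => T.dist z s₀) {z | F z = F x₀} hne
  have hz : F z = F x₀ := Function.argminOn_mem _ _ hne
  have hv₀z : v₀ ∈ F z := hz ▸ hv₀
  have hzs₀ : z ≠ s₀ := by
    obtain ⟨w, -, hw⟩ := hv₀z
    exact fun h => w.2 (hB.part_eq_iff.1 (hw ▸ h.symm))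
  obtain ⟨y, hzy, hys₀, hdist⟩ :=
    hT.connected.exists_adj_reachable_deleteIncidenceSet_dist_lt hzs₀
  have hFyz : F y = F z := Set.eq_of_subset_of_ncard_le
    (hB.image_supp_subset_of_adj hT.isAcyclic hzy (hmeet y z) hv₀z hys₀)
    (hz ▸ Function.argmin_le (fun x => (F x).ncard) y)
  exact hdist.not_ge (Function.argminOn_le (fun z => T.dist z s₀) _ (hFyz.trans hz))
end
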